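/- Let x be a positive integer and let f(y1,y2,y3) = -(x-y1)y1 - (x-y3)y3 + (Δ1+Δ3-Δ4)y3 + (Δ2+Δ4)²/4 + Δ1²/4 - (y1-y3-Δ1/2)² - (y1-y2+y3-(Δ2+Δ4)/2)², where Δ1,Δ2,Δ3,Δ4 are integers with Δ1+Δ3-Δ4 ≤ 0. If x > (Δ2+Δ4)²/4 + Δ3²/4 + Δ1²/4 + Δ1²/2 (i.e., x is sufficiently large, say x > (Δ2+Δ4)²/4 + Δ1² + Δ3²) and y1 is an integer with 0 < y1 < x, and 0 ≤ y3 ≤ x, then f(y1,y2,y3) < 0 for all real y2. -/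

import Mathlib

/-!
Bound `f` term by term. The drift term `(Δ1 + Δ3 - Δ4) y3` and the last square are `≤ 0`, and
`(x - y1) y1 ≥ x - 1` since `y1` is an integer strictly between `0` and `x`. Writing
`a = y1 - Δ1/2`, the remaining `y3`-dependence `(x - y3) y3 + (a - y3)²` is affine in `y3`, so on
`[0, x]` it is at least `min (a², (x - a)²)`. Together with the leftover `3 Δ1²/4` of the
`Δ1`-terms, each endpoint value is an Eisenstein norm `k² - k d + d²` with `k ≠ 0`, hence `≥ 1`,
which absorbs the constant `1` left over from `x - 1` against the size hypothesis on `x`.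
-/

theorem Int.one_le_sq_sub_mul_add_sq {k : ℤ} (hk : k ≠ 0) (d : ℤ) : 1 ≤ k ^ 2 - k * d + d ^ 2 := by
  have hk2 : 0 < k ^ 2 := by positivity
  -- `4 (k² - k d + d²) = (2k - d)² + 3 d²`
  nlinarith [sq_nonneg (2 * k - d), sq_nonneg d]

theorem one_le_sq_sub_half_add_sq {k : ℤ} (hk : k ≠ 0) (d : ℤ) :
    1 ≤ ((k : ℝ) - d / 2) ^ 2 + 3 * (d : ℝ) ^ 2 / 4 := by
  have h : ((1 : ℤ) : ℝ) ≤ ((k ^ 2 - k * d + d ^ 2 : ℤ) : ℝ) := by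
    exact_mod_cast Int.one_le_sq_sub_mul_add_sq hk d
  push_cast at h
  linarith

theorem Int.sub_one_le_sub_mul {x y : ℤ} (hy : 0 < y) (hyx : y < x) : x - 1 ≤ (x - y) * y := by
  have h : 0 ≤ (y - 1) * (x - 1 - y) := mul_nonneg (by omega) (by omega)
  linarith

theorem min_sq_le_sub_mul_add_sq {x t : ℝ} (a : ℝ) (ht : 0 ≤ t) (htx : t ≤ x) :
    min (a ^ 2) ((x - a) ^ 2) ≤ (x - t) * t + (a - t) ^ 2 := by
  have affine : (x - t) * t + (a - t) ^ 2 = a ^ 2 + (x - 2 * a) * t := by ring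
  rcases le_total (2 * a) x with h | h
  · exact min_le_of_left_le (by nlinarith)
  · exact min_le_of_right_le (by nlinarith)

theorem stmt_2_general (x y1 Δ1 Δ2 Δ3 Δ4 : ℤ)
    (hΔ : Δ1 + Δ3 - Δ4 ≤ 0)
    (hxlarge : (x : ℝ) > ((Δ2 : ℝ) + Δ4)^2/4 + (Δ1 : ℝ)^2 + (Δ3 : ℝ)^2)
    (hy1 : 0 < y1) (hy1x : y1 < x)
    (y3 : ℝ) (hy3 : 0 ≤ y3) (hy3x : y3 ≤ (x : ℝ)) :
    ∀ y2 : ℝ,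
      -((x : ℝ) - y1)*(y1 : ℝ) - ((x : ℝ) - y3)*y3 + ((Δ1 : ℝ) + Δ3 - Δ4)*y3 +
        ((Δ2 : ℝ) + Δ4)^2/4 + (Δ1 : ℝ)^2/4 - ((y1 : ℝ) - y3 - (Δ1 : ℝ)/2)^2 -
        ((y1 : ℝ) - y2 + y3 - ((Δ2 : ℝ) + Δ4)/2)^2 < 0 := by
  intro y2
  set a : ℝ := y1 - Δ1 / 2
  have hprod : (x : ℝ) - 1 ≤ (x - y1) * y1 := by
    exact_mod_cast Int.sub_one_le_sub_mul hy1 hy1x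
  have hdrift : ((Δ1 : ℝ) + Δ3 - Δ4) * y3 ≤ 0 :=
    mul_nonpos_of_nonpos_of_nonneg (by exact_mod_cast hΔ) hy3
  have hleft : 1 ≤ a ^ 2 + 3 * (Δ1 : ℝ) ^ 2 / 4 := one_le_sq_sub_half_add_sq hy1.ne' Δ1
  have hright : 1 ≤ (x - a) ^ 2 + 3 * (Δ1 : ℝ) ^ 2 / 4 := by
    have h := one_le_sq_sub_half_add_sq (sub_ne_zero.2 hy1x.ne') (-Δ1)
    push_cast at h
    convert h using 2 <;> ring
  have hendpoints : 1 ≤ min (a ^ 2) ((x - a) ^ 2) + 3 * (Δ1 : ℝ) ^ 2 / 4 := by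
    rw [← min_add_add_right]
    exact le_min hleft hright
  have hy3term := min_sq_le_sub_mul_add_sq a hy3 hy3x
  have hsq : (y1 : ℝ) - y3 - Δ1 / 2 = a - y3 := by ring
  rw [hsq]
  linarith [sq_nonneg ((y1 : ℝ) - y2 + y3 - ((Δ2 : ℝ) + Δ4) / 2), sq_nonneg (Δ3 : ℝ)]

theorem stmt_2 (x y1 Δ1 Δ2 Δ3 Δ4 : ℤ) (hx : 0 < x)
    (hΔ : Δ1 + Δ3 - Δ4 ≤ 0)
    (hxlarge : (x : ℝ) > ((Δ2 : ℝ) + Δ4)^2/4 + (Δ1 : ℝ)^2 + (Δ3 : ℝ)^2)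
    (hy1 : 0 < y1) (hy1x : y1 < x)
    (y3 : ℝ) (hy3 : 0 ≤ y3) (hy3x : y3 ≤ (x : ℝ)) :
    ∀ y2 : ℝ,
      -((x : ℝ) - y1)*(y1 : ℝ) - ((x : ℝ) - y3)*y3 + ((Δ1 : ℝ) + Δ3 - Δ4)*y3 +
        ((Δ2 : ℝ) + Δ4)^2/4 + (Δ1 : ℝ)^2/4 - ((y1 : ℝ) - y3 - (Δ1 : ℝ)/2)^2 -
        ((y1 : ℝ) - y2 + y3 - ((Δ2 : ℝ) + Δ4)/2)^2 < 0 :=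
  stmt_2_general x y1 Δ1 Δ2 Δ3 Δ4 hΔ hxlarge hy1 hy1x y3 hy3 hy3x
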